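/- Let A ∈ ℝ_max^{n×n}, B ∈ ℝ_max^{n×q}, C ∈ ℝ_max^{q×n}. (i) If a semimodule X ⊆ ℝ_max^n is (A,B)-controlled invariant (A X ⊆ X ⊕ Im B), then the congruence X^⊥ is (Bᵗ,Aᵗ)-conditioned invariant, i.e., Aᵗ(X^⊥ ∩ ker Bᵗ) ⊆ X^⊥. (ii) If a closed congruence W ⊂ (ℝ_max^n)² is (C,A)-conditioned invariant (A(W ∩ ker C) ⊆ W), then the semimodule W^⊤ is (Aᵗ,Cᵗ)-controlled invariant, i.e., Aᵗ(W^⊤) ⊆ W^⊤ ⊕ Im Cᵗ. -/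

import Mathlib

/-!
Max-plus (tropical) framework.

The max-plus semiring `ℝ_max = ℝ ∪ {-∞}` is modelled as `WithBot ℝ`:
max-plus addition `a ⊕ b = max a b` is the lattice `⊔`, and max-plus
multiplication `a ⊙ b = a + b` is `+` (with `⊥ = -∞` absorbing).
The topology induced by the metric `d(a,b) = |exp a - exp b|` is the
order topology.
-/

/-- The max-plus semiring `ℝ ∪ {-∞}`. -/
abbrev Rmax : Type := WithBot ℝ

/-- The topology of `ℝ_max` (the order topology, which coincides with the
topology induced by the metric `d(a,b) = |exp a - exp b|`). -/
instance : TopologicalSpace Rmax := Preorder.topology Rmax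

instance : OrderTopology Rmax := ⟨rfl⟩

/-- Vectors with entries in a (max-plus-like) semiring `R`. -/
abbrev Vec (R : Type*) (n : ℕ) := Fin n → R

section Defs

variable {R : Type*} [LinearOrder R] [Add R] [OrderBot R]

/-- Max-plus scalar action on a vector: `(λ x)_i = λ ⊙ x_i = λ + x_i`. -/
def sm {n : ℕ} (lam : R) (x : Vec R n) : Vec R n := fun i => lam + x i

/-- Max-plus matrix-vector product: `(A x)_i = ⊕_k A_{ik} ⊙ x_k = max_k (A_{ik} + x_k)`. -/
def mulVecMP {m n : ℕ} (A : Matrix (Fin m) (Fin n) R) (x : Vec R n) : Vec R m :=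
  fun i => Finset.univ.sup fun k => A i k + x k

/-- A subsemimodule (max-plus cone) of `R^n`: a subset stable under
max-plus linear combinations `λ x ⊕ μ y`. -/
def IsSemimodule {n : ℕ} (K : Set (Vec R n)) : Prop :=
  ∀ x ∈ K, ∀ y ∈ K, ∀ lam mu : R, (sm lam x ⊔ sm mu y) ∈ K

/-- Max-plus scalar action on a pair of vectors. -/
def smP {n : ℕ} (lam : R) (p : Vec R n × Vec R n) : Vec R n × Vec R n :=
  (sm lam p.1, sm lam p.2)

/-- A subsemimodule of `(R^n)²`. -/
def IsPairSemimodule {n : ℕ} (W : Set (Vec R n × Vec R n)) : Prop :=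
  ∀ p ∈ W, ∀ q ∈ W, ∀ lam mu : R, (smP lam p ⊔ smP mu q) ∈ W

/-- A congruence on `R^n`: an equivalence relation which is a
subsemimodule of `(R^n)²`. -/
def IsCongruence {n : ℕ} (W : Set (Vec R n × Vec R n)) : Prop :=
  Equivalence (fun x y => (x, y) ∈ W) ∧ IsPairSemimodule W

/-- The (max-plus) kernel of a matrix: `ker E = {(x,y) : E x = E y}`. -/
def kerM {p n : ℕ} (E : Matrix (Fin p) (Fin n) R) : Set (Vec R n × Vec R n) :=
  {w | mulVecMP E w.1 = mulVecMP E w.2}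

/-- The image of a matrix: `Im E = {E x}`. -/
def imM {n q : ℕ} (E : Matrix (Fin n) (Fin q) R) : Set (Vec R n) :=
  {y | ∃ x : Vec R q, y = mulVecMP E x}

/-- `A W = {(A x, A y) : (x,y) ∈ W}` for a set of pairs `W`. -/
def mapCong {n : ℕ} (A : Matrix (Fin n) (Fin n) R) (W : Set (Vec R n × Vec R n)) :
    Set (Vec R n × Vec R n) :=
  {p | ∃ w ∈ W, p = (mulVecMP A w.1, mulVecMP A w.2)}

/-- `A S = {A x : x ∈ S}`. -/
def mapSet {n : ℕ} (A : Matrix (Fin n) (Fin n) R) (S : Set (Vec R n)) : Set (Vec R n) :=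
  {y | ∃ x ∈ S, y = mulVecMP A x}

/-- `A⁻¹ S = {x : A x ∈ S}`. -/
def invSet {n : ℕ} (A : Matrix (Fin n) (Fin n) R) (S : Set (Vec R n)) : Set (Vec R n) :=
  {x | mulVecMP A x ∈ S}

/-- `A⁻¹ U = {(x,y) : (A x, A y) ∈ U}` for a set of pairs `U`. -/
def invPair {n : ℕ} (A : Matrix (Fin n) (Fin n) R) (U : Set (Vec R n × Vec R n)) :
    Set (Vec R n × Vec R n) :=
  {p | (mulVecMP A p.1, mulVecMP A p.2) ∈ U}

/-- The max-plus sum of two subsets of `R^n`: `X ⊕ Y = {x ⊕ y : x ∈ X, y ∈ Y}`. -/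
def setSum {n : ℕ} (X Y : Set (Vec R n)) : Set (Vec R n) :=
  {z | ∃ x ∈ X, ∃ y ∈ Y, z = x ⊔ y}

/-- The max-plus sum of two subsets of `(R^n)²`. -/
def pairSum {n : ℕ} (X Y : Set (Vec R n × Vec R n)) : Set (Vec R n × Vec R n) :=
  {z | ∃ x ∈ X, ∃ y ∈ Y, z = x ⊔ y}

/-- `W` is `(C,A)`-conditioned invariant: `A (W ∩ ker C) ⊆ W`. -/
def CondInv {n q : ℕ} (C : Matrix (Fin q) (Fin n) R) (A : Matrix (Fin n) (Fin n) R)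
    (W : Set (Vec R n × Vec R n)) : Prop :=
  mapCong A (W ∩ kerM C) ⊆ W

/-- `X` is `(A,B)`-controlled invariant: `A X ⊆ X ⊕ Im B`. -/
def ContrInv {n q : ℕ} (A : Matrix (Fin n) (Fin n) R) (B : Matrix (Fin n) (Fin q) R)
    (X : Set (Vec R n)) : Prop :=
  mapSet A X ⊆ setSum X (imM B)

/-- The max-plus scalar product `uᵗ v = ⊕_i u_i ⊙ v_i = max_i (u_i + v_i)`. -/
def dotMP {n : ℕ} (u v : Vec R n) : R := Finset.univ.sup fun i => u i + v i

/-- The orthogonal of a semimodule `X ⊆ R^n`: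
`X^⊥ = {(x,y) : xᵗ z = yᵗ z, ∀ z ∈ X}`. -/
def orthS {n : ℕ} (X : Set (Vec R n)) : Set (Vec R n × Vec R n) :=
  {p | ∀ z ∈ X, dotMP p.1 z = dotMP p.2 z}

/-- The orthogonal of a congruence (or set of pairs) `W ⊆ (R^n)²`:
`W^⊤ = {z : xᵗ z = yᵗ z, ∀ (x,y) ∈ W}`. -/
def orthC {n : ℕ} (W : Set (Vec R n × Vec R n)) : Set (Vec R n) :=
  {z | ∀ p ∈ W, dotMP p.1 z = dotMP p.2 z}

/-- The smallest congruence containing a set `S ⊆ (R^n)²`. -/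
def spanCong {n : ℕ} (S : Set (Vec R n × Vec R n)) : Set (Vec R n × Vec R n) :=
  ⋂₀ {W | IsCongruence W ∧ S ⊆ W}

/-- The smallest semimodule containing a set `S ⊆ R^n`. -/
def spanSet {n : ℕ} (S : Set (Vec R n)) : Set (Vec R n) :=
  ⋂₀ {K | IsSemimodule K ∧ S ⊆ K}

end Defs

/-!
Part (i) is adjointness, `⟨Aᵀx, z⟩ = ⟨x, Az⟩`: writing `Az = x' ⊕ Bu` with `x' ∈ X` gives
`⟨Aᵀx, z⟩ = ⟨x, x'⟩ ⊕ ⟨Bᵀx, u⟩`, which takes the same value at both ends of a pair in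
`X^⊥ ∩ ker Bᵀ`.

For part (ii), adjointness turns conditioned invariance into `Aᵀ W^⊤ ⊆ (W ∩ ker C)^⊤`, so it
suffices to split every `v ∈ (W ∩ ker C)^⊤` as `v = P v ⊕ Cᵀ C♯ v`. Here `C♯ v` is the largest `u`
with `Cᵀ u ≤ v`, and `P v` is the largest element of `W^⊤` below `v`, with coordinates
`(P v)_i = inf {⟨y, v⟩ : e_i ⊕ y ~ y}`; it lies in `W^⊤` because `⟨x, P v⟩` is the infimum of
`⟨y, v⟩` over `x ⊕ y ~ y`, which depends only on the class of `x`. Both summands are `≤ v`.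
Where `(Cᵀ C♯ v)_i < v_i`, maximality of `C♯ v` yields `g` with `C e_i ≤ C g` and `⟨g, v⟩ < v_i`;
then for every `y` with `e_i ⊕ y ~ y` the pair `(e_i ⊕ y ⊕ g, y ⊕ g)` lies in `W ∩ ker C`, which
forces `v_i ≤ ⟨y, v⟩`, that is, `v_i ≤ (P v)_i`.
-/

open Finset

namespace Rmax

lemma add_finset_sup {ι : Type*} (s : Finset ι) (a : Rmax) (f : ι → Rmax) :
    a + s.sup f = s.sup fun i => a + f i := by
  induction s using Finset.cons_induction with
  | empty => simp
  | cons b s _ ih => rw [sup_cons, sup_cons, ← ih, max_add_add_left]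

lemma finset_sup_add {ι : Type*} (s : Finset ι) (f : ι → Rmax) (a : Rmax) :
    s.sup f + a = s.sup fun i => f i + a := by
  simp only [add_comm _ a, add_finset_sup]

lemma coe_add_neg_add (r : ℝ) (x : Rmax) : (r : Rmax) + ((-r : ℝ) + x) = x := by
  rw [← add_assoc, ← WithBot.coe_add, add_neg_cancel, WithBot.coe_zero, zero_add]

lemma coe_add_le_iff {r : ℝ} {x y : Rmax} : (r : Rmax) + x ≤ y ↔ x ≤ ((-r : ℝ) : Rmax) + y := by
  conv_lhs => rw [← coe_add_neg_add r y]
  exact WithBot.add_le_add_iff_left WithBot.coe_ne_bot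

lemma coe_add_lt_iff {r : ℝ} {x y : Rmax} : (r : Rmax) + x < y ↔ x < ((-r : ℝ) : Rmax) + y := by
  conv_lhs => rw [← coe_add_neg_add r y]
  exact WithBot.add_lt_add_iff_left WithBot.coe_ne_bot

end Rmax

open Rmax

section Vectors

variable {m n : ℕ}

def unitVec (i : Fin n) : Vec Rmax n := fun k => if k = i then 0 else ⊥

lemma sm_sup (a : Rmax) (x y : Vec Rmax n) : sm a (x ⊔ y) = sm a x ⊔ sm a y :=
  funext fun _ => (max_add_add_left _ _ _).symm

lemma sm_zero (x : Vec Rmax n) : sm 0 x = x :=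
  funext fun _ => zero_add _

lemma unitVec_le_iff {i : Fin n} {x : Vec Rmax n} : unitVec i ≤ x ↔ 0 ≤ x i := by
  refine ⟨fun h => by simpa [unitVec] using h i, fun h k => ?_⟩
  by_cases hk : k = i
  · simp [unitVec, hk, h]
  · simp [unitVec, hk]

lemma finset_sup_sm_unitVec (x : Vec Rmax n) :
    univ.sup (fun k => sm (x k) (unitVec k)) = x := by
  funext i
  rw [Finset.sup_apply]
  refine le_antisymm (Finset.sup_le fun k _ => ?_) ?_
  · by_cases hk : i = k
    · simp [sm, unitVec, hk]
    · simp [sm, unitVec, hk]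
  · exact le_of_eq_of_le (by simp [sm, unitVec])
      (le_sup (f := fun k => sm (x k) (unitVec k) i) (mem_univ i))

lemma dotMP_comm (x y : Vec Rmax n) : dotMP x y = dotMP y x :=
  Finset.sup_congr rfl fun _ _ => add_comm _ _

lemma dotMP_sup_left (x y v : Vec Rmax n) : dotMP (x ⊔ y) v = dotMP x v ⊔ dotMP y v := by
  simp only [dotMP, Pi.sup_apply, ← max_add_add_right]
  exact Finset.sup_sup

lemma dotMP_sup_right (v x y : Vec Rmax n) : dotMP v (x ⊔ y) = dotMP v x ⊔ dotMP v y := by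
  simp only [dotMP_comm v, dotMP_sup_left]

lemma dotMP_finset_sup_left {ι : Type*} (s : Finset ι) (x : ι → Vec Rmax n) (v : Vec Rmax n) :
    dotMP (s.sup x) v = s.sup fun k => dotMP (x k) v := by
  induction s using Finset.cons_induction with
  | empty => simp [dotMP]
  | cons b s _ ih => rw [sup_cons, sup_cons, dotMP_sup_left, ih]

lemma dotMP_sm_left (a : Rmax) (x v : Vec Rmax n) : dotMP (sm a x) v = a + dotMP x v := by
  simp only [dotMP, sm, add_finset_sup, add_assoc]

lemma dotMP_unitVec_left (i : Fin n) (v : Vec Rmax n) : dotMP (unitVec i) v = v i := by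
  refine le_antisymm (Finset.sup_le fun k _ => ?_) ?_
  · by_cases hk : k = i
    · simp [unitVec, hk]
    · simp [unitVec, hk]
  · exact le_of_eq_of_le (by simp [unitVec])
      (le_sup (f := fun k => unitVec i k + v k) (mem_univ i))

lemma mulVecMP_apply (M : Matrix (Fin m) (Fin n) Rmax) (x : Vec Rmax n) (j : Fin m) :
    mulVecMP M x j = dotMP (M j) x :=
  rfl

lemma mulVecMP_sup (M : Matrix (Fin m) (Fin n) Rmax) (x y : Vec Rmax n) :
    mulVecMP M (x ⊔ y) = mulVecMP M x ⊔ mulVecMP M y :=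
  funext fun j => dotMP_sup_right (M j) x y

lemma mulVecMP_mono (M : Matrix (Fin m) (Fin n) Rmax) : Monotone (mulVecMP M) := fun x y h => by
  rw [← sup_eq_right.2 h, mulVecMP_sup]
  exact le_sup_left

lemma mulVecMP_unitVec (M : Matrix (Fin m) (Fin n) Rmax) (i : Fin n) (j : Fin m) :
    mulVecMP M (unitVec i) j = M j i := by
  rw [mulVecMP_apply, dotMP_comm, dotMP_unitVec_left]

lemma dotMP_mulVecMP_transpose (M : Matrix (Fin m) (Fin n) Rmax) (x : Vec Rmax m)
    (w : Vec Rmax n) : dotMP (mulVecMP M.transpose x) w = dotMP x (mulVecMP M w) := by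
  simp only [dotMP, mulVecMP, Matrix.transpose_apply, finset_sup_add, add_finset_sup]
  rw [Finset.sup_comm]
  simp only [add_comm, add_left_comm]

lemma dotMP_mulVecMP_transpose_right (M : Matrix (Fin m) (Fin n) Rmax) (x : Vec Rmax n)
    (z : Vec Rmax m) : dotMP x (mulVecMP M.transpose z) = dotMP (mulVecMP M x) z := by
  rw [dotMP_comm, dotMP_mulVecMP_transpose, dotMP_comm]

end Vectors

section Congruence

variable {n : ℕ} {W : Set (Vec Rmax n × Vec Rmax n)}

lemma IsPairSemimodule.smP_mem (hW : IsPairSemimodule W) {p : Vec Rmax n × Vec Rmax n}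
    (hp : p ∈ W) (a : Rmax) : smP a p ∈ W := by
  simpa using hW p hp p hp a a

lemma IsPairSemimodule.sup_mem (hW : IsPairSemimodule W) {p p' : Vec Rmax n × Vec Rmax n}
    (hp : p ∈ W) (hp' : p' ∈ W) : p ⊔ p' ∈ W := by
  simpa [smP, sm_zero] using hW p hp p' hp' 0 0

/-- The order of the quotient semimodule `Vec Rmax n ⧸ W`: `[x] ⊕ [y] = [y]`. -/
def CongrLE (W : Set (Vec Rmax n × Vec Rmax n)) (x y : Vec Rmax n) : Prop :=
  (x ⊔ y, y) ∈ W

namespace CongrLE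

variable {x x' y a b : Vec Rmax n}

lemma refl (hW : IsCongruence W) (x : Vec Rmax n) : CongrLE W x x := by
  rw [CongrLE, sup_idem]
  exact hW.1.refl x

lemma sup_right (hW : IsCongruence W) (h : CongrLE W x y) (z : Vec Rmax n) :
    CongrLE W x (y ⊔ z) := by
  rw [CongrLE, ← sup_assoc]
  exact hW.2.sup_mem h (hW.1.refl z)

lemma of_mem (hW : IsCongruence W) (hab : (a, b) ∈ W) (h : CongrLE W b y) : CongrLE W a y :=
  hW.1.trans (hW.2.sup_mem hab (hW.1.refl y)) h

lemma of_le (hW : IsCongruence W) (h : CongrLE W x y) (hx : x' ≤ x) : CongrLE W x' y := by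
  have hpair : ((x ⊔ y) ⊔ (x' ⊔ y), y ⊔ (x' ⊔ y)) ∈ W := hW.2.sup_mem h (hW.1.refl _)
  rw [sup_eq_left.2 (sup_le_sup_right hx y), sup_eq_right.2 le_sup_right] at hpair
  exact hW.1.trans (hW.1.symm hpair) h

lemma sm (hW : IsCongruence W) (h : CongrLE W x y) (c : Rmax) : CongrLE W (sm c x) (sm c y) := by
  rw [CongrLE, ← sm_sup]
  exact hW.2.smP_mem h c

lemma finset_sup (hW : IsCongruence W) {ι : Type*} {s : Finset ι} {x y : ι → Vec Rmax n}
    (h : ∀ k ∈ s, CongrLE W (x k) (y k)) : CongrLE W (s.sup x) (s.sup y) := by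
  induction s using Finset.cons_induction with
  | empty => exact refl hW ⊥
  | cons k s _ ih =>
    rw [forall_mem_cons] at h
    rw [sup_cons, sup_cons, CongrLE, sup_sup_sup_comm]
    exact hW.2.sup_mem h.1 (ih h.2)

end CongrLE

end Congruence

section Projection

variable {n : ℕ} {W : Set (Vec Rmax n × Vec Rmax n)} {v : Vec Rmax n}

/-- The largest element of `orthC W` below `v`. -/
noncomputable def projOrthC (W : Set (Vec Rmax n × Vec Rmax n)) (v : Vec Rmax n) : Vec Rmax n :=
  fun i => sInf ((fun y => dotMP y v) '' {y | CongrLE W (unitVec i) y})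

lemma projOrthC_apply_le {i : Fin n} {y : Vec Rmax n} (h : CongrLE W (unitVec i) y) :
    projOrthC W v i ≤ dotMP y v :=
  csInf_le (OrderBot.bddBelow _) ⟨y, h, rfl⟩

lemma le_projOrthC_apply (hW : IsCongruence W) {i : Fin n} {t : Rmax}
    (h : ∀ y, CongrLE W (unitVec i) y → t ≤ dotMP y v) : t ≤ projOrthC W v i :=
  le_csInf ⟨_, unitVec i, CongrLE.refl hW _, rfl⟩ (by rintro _ ⟨y, hy, rfl⟩; exact h y hy)

lemma projOrthC_le (hW : IsCongruence W) (v : Vec Rmax n) : projOrthC W v ≤ v := fun i =>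
  (projOrthC_apply_le (CongrLE.refl hW _)).trans_eq (dotMP_unitVec_left i v)

lemma dotMP_projOrthC_le (hW : IsCongruence W) {x y : Vec Rmax n} (h : CongrLE W x y) :
    dotMP x (projOrthC W v) ≤ dotMP y v := by
  refine Finset.sup_le fun k _ => ?_
  cases hk : x k using WithBot.recBotCoe with
  | bot => simp
  | coe r =>
    rw [coe_add_le_iff, ← dotMP_sm_left]
    refine projOrthC_apply_le ((h.sm hW _).of_le hW (unitVec_le_iff.2 ?_))
    simp [sm, hk, ← WithBot.coe_add]

lemma exists_congrLE_dotMP_lt (hW : IsCongruence W) {x : Vec Rmax n} {c : Rmax}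
    (h : dotMP x (projOrthC W v) < c) : ∃ y, CongrLE W x y ∧ dotMP y v < c := by
  have hc : ⊥ < c := bot_le.trans_lt h
  have hk : ∀ k, ∃ y, CongrLE W (unitVec k) y ∧ x k + dotMP y v < c := by
    intro k
    cases hxk : x k using WithBot.recBotCoe with
    | bot => exact ⟨unitVec k, CongrLE.refl hW _, by simpa using hc⟩
    | coe r =>
      have hlt : projOrthC W v k < ((-r : ℝ) : Rmax) + c := by
        rw [← coe_add_lt_iff, ← hxk]
        exact (le_sup (f := fun k => x k + projOrthC W v k) (mem_univ k)).trans_lt h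
      obtain ⟨_, ⟨y, hy, rfl⟩, hyv⟩ :=
        exists_lt_of_csInf_lt (Set.Nonempty.image _ ⟨unitVec k, CongrLE.refl hW _⟩) hlt
      exact ⟨y, hy, coe_add_lt_iff.2 hyv⟩
  choose y hy hyv using hk
  refine ⟨univ.sup fun k => sm (x k) (y k), ?_, ?_⟩
  · simpa only [finset_sup_sm_unitVec] using
      CongrLE.finset_sup hW (s := univ) fun k _ => (hy k).sm hW (x k)
  · rw [dotMP_finset_sup_left]
    simpa [dotMP_sm_left] using (Finset.sup_lt_iff hc).2 fun k _ => hyv k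

lemma projOrthC_mem_orthC (hW : IsCongruence W) (v : Vec Rmax n) : projOrthC W v ∈ orthC W := by
  have hle : ∀ a b, (a, b) ∈ W → dotMP a (projOrthC W v) ≤ dotMP b (projOrthC W v) :=
    fun a b hab => le_of_forall_gt_imp_ge_of_dense fun c hc => by
      obtain ⟨y, hby, hyc⟩ := exists_congrLE_dotMP_lt hW hc
      exact (dotMP_projOrthC_le hW (hby.of_mem hW hab)).trans hyc.le
  exact fun p hp => le_antisymm (hle _ _ hp) (hle _ _ (hW.1.symm hp))

end Projection

section Residual

variable {n q : ℕ} (C : Matrix (Fin q) (Fin n) Rmax) (v : Vec Rmax n)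

/-- The largest `u` with `Cᵀ u ≤ v`. On a row `j` of `C` that is identically `⊥` the set is
unbounded and `sSup` returns a junk value, harmless since it only enters via `C j i + u j = ⊥`. -/
noncomputable def residualMP : Vec Rmax q := fun j => sSup {x | ∀ i, C j i + x ≤ v i}

lemma add_residualMP_le (j : Fin q) (i : Fin n) : C j i + residualMP C v j ≤ v i := by
  cases hC : C j i using WithBot.recBotCoe with
  | bot => simp
  | coe c =>
    rw [coe_add_le_iff]
    exact csSup_le ⟨⊥, fun k => by simp⟩ fun x hx => coe_add_le_iff.1 (hC ▸ hx i)

lemma mulVecMP_transpose_residualMP_le : mulVecMP C.transpose (residualMP C v) ≤ v := fun i =>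
  Finset.sup_le fun j _ => add_residualMP_le C v j i

lemma exists_le_mulVecMP_apply_of_lt {i : Fin n} {j : Fin q}
    (h : C j i + residualMP C v j < v i) : ∃ g, C j i ≤ mulVecMP C g j ∧ dotMP g v < v i := by
  cases hC : C j i using WithBot.recBotCoe with
  | bot => exact ⟨⊥, bot_le, by simpa [dotMP] using bot_le.trans_lt h⟩
  | coe c =>
    -- `t = v i - C j i` is the bound on `u j` from column `i`; as it is not attained,
    -- some column `k` imposes a strictly smaller one.
    set t : Rmax := ((-c : ℝ) : Rmax) + v i
    have ht : t ∉ {x | ∀ k, C j k + x ≤ v k} := fun ht => by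
      have hle : t ≤ residualMP C v j :=
        le_csSup ⟨t, fun x hx => coe_add_le_iff.1 (hC ▸ hx i)⟩ ht
      have hvi : v i ≤ c + residualMP C v j := coe_add_neg_add c (v i) ▸ add_le_add_right hle _
      exact (hvi.trans_lt (hC ▸ h)).false
    obtain ⟨k, hk⟩ : ∃ k, v k < C j k + t := by simpa using ht
    cases hCk : C j k using WithBot.recBotCoe with
    | bot => simp [hCk] at hk
    | coe d =>
      refine ⟨sm ((c - d : ℝ) : Rmax) (unitVec k), ?_, ?_⟩
      · calc (c : Rmax) = C j k + sm ((c - d : ℝ) : Rmax) (unitVec k) k := by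
              simp [sm, unitVec, hCk, ← WithBot.coe_add]
          _ ≤ mulVecMP C _ j := le_sup (f := fun k' => C j k' + _) (mem_univ k)
      · rw [dotMP_sm_left, dotMP_unitVec_left]
        calc ((c - d : ℝ) : Rmax) + v k < ((c - d : ℝ) : Rmax) + (d + t) :=
              WithBot.add_lt_add_left WithBot.coe_ne_bot (hCk ▸ hk)
          _ = v i := by rw [← add_assoc, ← WithBot.coe_add, sub_add_cancel, coe_add_neg_add]

lemma exists_mulVecMP_unitVec_le_of_lt {i : Fin n}
    (h : mulVecMP C.transpose (residualMP C v) i < v i) :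
    ∃ g, mulVecMP C (unitVec i) ≤ mulVecMP C g ∧ dotMP g v < v i := by
  have hj : ∀ j, C j i + residualMP C v j < v i := fun j =>
    (le_sup (f := fun j => C j i + residualMP C v j) (mem_univ j)).trans_lt h
  choose g hg hgv using fun j => exists_le_mulVecMP_apply_of_lt C v (hj j)
  refine ⟨univ.sup g, fun j => ?_, ?_⟩
  · rw [mulVecMP_unitVec]
    exact (hg j).trans (mulVecMP_mono C (le_sup (mem_univ j)) j)
  · rw [dotMP_finset_sup_left]
    exact (Finset.sup_lt_iff (bot_le.trans_lt h)).2 fun j _ => hgv j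

end Residual

section Duality

variable {n q : ℕ} {W : Set (Vec Rmax n × Vec Rmax n)} {C : Matrix (Fin q) (Fin n) Rmax}

lemma le_projOrthC_of_mem_orthC_inter_kerM (hW : IsCongruence W) {v : Vec Rmax n}
    (hv : v ∈ orthC (W ∩ kerM C)) {i : Fin n} (h : mulVecMP C.transpose (residualMP C v) i < v i) :
    v i ≤ projOrthC W v i := by
  obtain ⟨g, hCg, hgv⟩ := exists_mulVecMP_unitVec_le_of_lt C v h
  refine le_projOrthC_apply hW fun y hy => ?_
  have hker : (unitVec i ⊔ (y ⊔ g), y ⊔ g) ∈ kerM C := by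
    change mulVecMP C _ = mulVecMP C _
    rw [mulVecMP_sup, mulVecMP_sup, sup_eq_right.2 (hCg.trans le_sup_right)]
  have heq := hv _ ⟨hy.sup_right hW g, hker⟩
  rw [dotMP_sup_left, dotMP_unitVec_left, dotMP_sup_left] at heq
  exact (le_sup_iff.1 (le_sup_left.trans heq.le)).resolve_right hgv.not_ge

theorem orthC_inter_kerM_subset (hW : IsCongruence W) (C : Matrix (Fin q) (Fin n) Rmax) :
    orthC (W ∩ kerM C) ⊆ setSum (orthC W) (imM C.transpose) := by
  intro v hv
  refine ⟨projOrthC W v, projOrthC_mem_orthC hW v, _, ⟨residualMP C v, rfl⟩, funext fun i => ?_⟩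
  refine le_antisymm ?_ (sup_le (projOrthC_le hW v i) (mulVecMP_transpose_residualMP_le C v i))
  rcases lt_or_ge (mulVecMP C.transpose (residualMP C v) i) (v i) with h | h
  · exact le_sup_of_le_left (le_projOrthC_of_mem_orthC_inter_kerM hW hv h)
  · exact le_sup_of_le_right h

lemma mulVecMP_transpose_mem_orthC {A : Matrix (Fin n) (Fin n) Rmax}
    {W' : Set (Vec Rmax n × Vec Rmax n)} (hA : mapCong A W' ⊆ W) {z : Vec Rmax n}
    (hz : z ∈ orthC W) : mulVecMP A.transpose z ∈ orthC W' := fun p hp => by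
  rw [dotMP_mulVecMP_transpose_right, dotMP_mulVecMP_transpose_right]
  exact hz _ (hA ⟨p, hp, rfl⟩)

theorem CondInv.contrInv_orthC {A : Matrix (Fin n) (Fin n) Rmax} (hW : IsCongruence W)
    (hA : CondInv C A W) : ContrInv A.transpose C.transpose (orthC W) := by
  rintro _ ⟨z, hz, rfl⟩
  exact orthC_inter_kerM_subset hW C (mulVecMP_transpose_mem_orthC hA hz)

theorem ContrInv.condInv_orthS {A : Matrix (Fin n) (Fin n) Rmax} {B : Matrix (Fin n) (Fin q) Rmax}
    {X : Set (Vec Rmax n)} (hX : ContrInv A B X) : CondInv B.transpose A.transpose (orthS X) := by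
  rintro _ ⟨⟨x, y⟩, ⟨hxy, hker⟩, rfl⟩ z hz
  obtain ⟨x', hx', _, ⟨u, rfl⟩, hAz⟩ := hX ⟨z, hz, rfl⟩
  have hdot : ∀ w, dotMP (mulVecMP A.transpose w) z =
      dotMP w x' ⊔ dotMP (mulVecMP B.transpose w) u := fun w => by
    rw [dotMP_mulVecMP_transpose, hAz, dotMP_sup_right, dotMP_mulVecMP_transpose]
  change dotMP _ z = dotMP _ z
  rw [hdot, hdot, hxy x' hx', show mulVecMP B.transpose x = mulVecMP B.transpose y from hker]

end Duality

/-- (i) If a semimodule `X ⊆ ℝ_max^n` is `(A,B)`-controlled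
invariant, then the congruence `X^⊥` is `(Bᵗ,Aᵗ)`-conditioned invariant.
(ii) If a closed congruence `W ⊆ (ℝ_max^n)²` is `(C,A)`-conditioned invariant,
then the semimodule `W^⊤` is `(Aᵗ,Cᵗ)`-controlled invariant. -/
theorem controlled_conditioned_duality
    {n q : ℕ} (A : Matrix (Fin n) (Fin n) Rmax) (B : Matrix (Fin n) (Fin q) Rmax)
    (C : Matrix (Fin q) (Fin n) Rmax) :
    (∀ X : Set (Vec Rmax n), IsSemimodule X → ContrInv A B X →
      CondInv B.transpose A.transpose (orthS X)) ∧
    (∀ W : Set (Vec Rmax n × Vec Rmax n), IsCongruence W → IsClosed W →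
      CondInv C A W → ContrInv A.transpose C.transpose (orthC W)) :=
  ⟨fun _ _ hX => hX.condInv_orthS, fun _ hW _ hA => hA.contrInv_orthC hW⟩
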